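/- The one-dimensional subalgebras of A5 are exactly the subspaces ⟨e1⟩, ⟨e2⟩, ⟨e1 + αe2 + e3⟩ for α ∈ ℂ, and ⟨e1 + αe2 − e3⟩ for α ∈ ℂ. -/
import Mathlib


set_option linter.unreachableTactic false
set_option linter.unnecessarySeqFocus false
set_option linter.unusedTactic false

noncomputable section

/-- The underlying space of our 3-dimensional algebras. -/
abbrev V3 : Type := Fin 3 → ℂ
/-- Multiplication of `A5` (and of `S2`): unit `e1`, with `e2 * e3 = e2`,
`e3 * e2 = -e2`, `e3 * e3 = e1` and `e2 * e2 = 0`. -/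
def A5mul : V3 →ₗ[ℂ] V3 →ₗ[ℂ] V3 :=
  LinearMap.mk₂ ℂ
    (fun x y => ![x 0 * y 0 + x 2 * y 2,
                  x 0 * y 1 + x 1 * y 0 + x 1 * y 2 - x 2 * y 1,
                  x 0 * y 2 + x 2 * y 0])
    (fun x x' y => by funext k; fin_cases k <;> simp <;> ring)
    (fun a x y => by funext k; fin_cases k <;> simp <;> ring)
    (fun x y y' => by funext k; fin_cases k <;> simp <;> ring)
    (fun a x y => by funext k; fin_cases k <;> simp <;> ring)
/-- The basis vector `e1` (the unit). -/
def e1 : V3 := ![1, 0, 0]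
/-- The basis vector `e2`. -/
def e2 : V3 := ![0, 1, 0]
/-- The basis vector `e3`. -/
def e3 : V3 := ![0, 0, 1]

lemma A5mul_apply (x y : V3) : A5mul x y = ![x 0 * y 0 + x 2 * y 2,
    x 0 * y 1 + x 1 * y 0 + x 1 * y 2 - x 2 * y 1, x 0 * y 2 + x 2 * y 0] := rfl

lemma closed_of_sq {u : V3} (h : A5mul u u ∈ Submodule.span ℂ {u}) :
    ∀ x ∈ Submodule.span ℂ {u}, ∀ y ∈ Submodule.span ℂ {u},
      A5mul x y ∈ Submodule.span ℂ {u} := by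
  intro x hx y hy
  obtain ⟨c, rfl⟩ := Submodule.mem_span_singleton.mp hx
  obtain ⟨d, rfl⟩ := Submodule.mem_span_singleton.mp hy
  simp only [map_smul, LinearMap.smul_apply]
  exact Submodule.smul_mem _ _ (Submodule.smul_mem _ _ h)

lemma span_eq_of_smul {u v : V3} {s : ℂ} (hs : s ≠ 0) (h : v = s • u) :
    Submodule.span ℂ {v} = Submodule.span ℂ {u} := by
  subst h
  exact Submodule.span_singleton_smul_eq (IsUnit.mk0 s hs) u

/-- **Theorem.** The one-dimensional subalgebras of `A5` are exactly `⟨e1⟩`,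
`⟨e2⟩`, and `⟨e1 + α e2 ± e3⟩` for `α ∈ ℂ`. -/
theorem one_dim_subalgebras_of_A5 (W : Submodule ℂ V3) :
    ((∀ x ∈ W, ∀ y ∈ W, A5mul x y ∈ W) ∧ Module.finrank ℂ W = 1) ↔
      (W = Submodule.span ℂ {e1} ∨ W = Submodule.span ℂ {e2} ∨
        (∃ α : ℂ, W = Submodule.span ℂ {e1 + α • e2 + e3}) ∨
        (∃ α : ℂ, W = Submodule.span ℂ {e1 + α • e2 - e3})) := by
  constructor
  · rintro ⟨hmul, hrank⟩
    obtain ⟨v, hv0, hv⟩ := finrank_eq_one_iff'.mp hrank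
    have hvne : (v : V3) ≠ 0 := fun h => hv0 (Subtype.coe_injective (by simpa using h))
    have hW : W = Submodule.span ℂ {(v : V3)} := by
      apply le_antisymm
      · intro w hw
        obtain ⟨c, hc⟩ := hv ⟨w, hw⟩
        exact Submodule.mem_span_singleton.mpr ⟨c, by simpa using congrArg Subtype.val hc⟩
      · rw [Submodule.span_singleton_le_iff_mem]; exact v.2
    set u : V3 := (v : V3) with hu
    have hsq : A5mul u u ∈ Submodule.span ℂ {u} := by
      rw [← hW]; exact hmul u v.2 u v.2
    obtain ⟨μ, hμ⟩ := Submodule.mem_span_singleton.mp hsq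
    have E0 : μ * u 0 = u 0 * u 0 + u 2 * u 2 := by
      have := congrFun hμ 0; simpa [A5mul_apply] using this
    have E1 : μ * u 1 = u 0 * u 1 + u 1 * u 0 + u 1 * u 2 - u 2 * u 1 := by
      have := congrFun hμ 1; simpa [A5mul_apply] using this
    have E2 : μ * u 2 = u 0 * u 2 + u 2 * u 0 := by
      have := congrFun hμ 2; simpa [A5mul_apply] using this
    by_cases hc : u 2 = 0
    · by_cases ha : u 0 = 0
      · -- u = b • e2
        have hb : u 1 ≠ 0 := by
          intro hb
          apply hvne
          funext i; fin_cases i <;> simp [ha, hb, hc]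
        refine Or.inr (Or.inl ?_)
        rw [hW]
        exact span_eq_of_smul hb (by funext i; fin_cases i <;> simp [e2, ha, hc])
      · -- μ = a, b = 0, u = a • e1
        have hμa : μ = u 0 := by
          have : μ * u 0 = u 0 * u 0 := by rw [E0, hc]; ring
          exact mul_right_cancel₀ ha this
        have hb : u 1 = 0 := by
          rw [hμa, hc] at E1
          have : u 0 * u 1 = 0 := by linear_combination -E1
          rcases mul_eq_zero.mp this with h | h
          · exact absurd h ha
          · exact h
        refine Or.inl ?_
        rw [hW]
        exact span_eq_of_smul ha (by funext i; fin_cases i <;> simp [e1, hb, hc])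
    · -- c ≠ 0 : μ = 2a, c² = a²
      have hμ2 : μ = 2 * u 0 := by
        have : μ * u 2 = (2 * u 0) * u 2 := by rw [E2]; ring
        exact mul_right_cancel₀ hc this
      have hca : u 2 * u 2 = u 0 * u 0 := by
        rw [hμ2] at E0; linear_combination -E0
      have ha : u 0 ≠ 0 := by
        intro h; apply hc
        have : u 2 * u 2 = 0 := by rw [hca, h]; ring
        exact (mul_self_eq_zero).mp this
      rcases mul_self_eq_mul_self_iff.mp hca with h | h
      · -- c = a : u = a • (e1 + (b/a) e2 + e3)
        refine Or.inr (Or.inr (Or.inl ⟨u 1 / u 0, ?_⟩))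
        rw [hW]
        refine span_eq_of_smul ha ?_
        funext i; fin_cases i <;>
          simp [e1, e2, e3, h, mul_div_cancel₀ _ ha] <;> field_simp
      · -- c = -a : u = a • (e1 + (b/a) e2 - e3)
        refine Or.inr (Or.inr (Or.inr ⟨u 1 / u 0, ?_⟩))
        rw [hW]
        refine span_eq_of_smul ha ?_
        funext i; fin_cases i <;>
          simp [e1, e2, e3, h, mul_div_cancel₀ _ ha] <;> field_simp
  · rintro (rfl | rfl | ⟨α, rfl⟩ | ⟨α, rfl⟩)
    · refine ⟨closed_of_sq ?_, finrank_span_singleton ?_⟩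
      · exact Submodule.mem_span_singleton.mpr ⟨1, by
          funext i; fin_cases i <;> simp [A5mul_apply, e1]⟩
      · intro h; simpa [e1] using congrFun h 0
    · refine ⟨closed_of_sq ?_, finrank_span_singleton ?_⟩
      · exact Submodule.mem_span_singleton.mpr ⟨0, by
          funext i; fin_cases i <;> simp [A5mul_apply, e2]⟩
      · intro h; simpa [e2] using congrFun h 1
    · refine ⟨closed_of_sq ?_, finrank_span_singleton ?_⟩
      · exact Submodule.mem_span_singleton.mpr ⟨2, by
          funext i; fin_cases i <;> simp [A5mul_apply, e1, e2, e3] <;> ring⟩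
      · intro h; simpa [e1, e2, e3] using congrFun h 2
    · refine ⟨closed_of_sq ?_, finrank_span_singleton ?_⟩
      · exact Submodule.mem_span_singleton.mpr ⟨2, by
          funext i; fin_cases i <;> simp [A5mul_apply, e1, e2, e3] <;> ring⟩
      · intro h; simpa [e1, e2, e3] using congrFun h 2
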